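/- Let n ≥ 2 and let T_avg = (∑_{v ∈ ZMod 2n} Tr(v)) / (2n) be the average transmission of the power graph P(C_{2n}) of the cyclic group ZMod 2n. Then the distance spectral radius of the power graph of the dicyclic group of order 4n satisfies ρ₁(P(Q_{4n})) ≥ ((T_avg + 4n − 3) + √((T_avg − 4n + 3)² + 16(2n − 1)²)) / 2. -/

import Mathlib

open scoped Classical

noncomputable section

/-- The power graph of a (multiplicative) group: distinct `x, y` are adjacent iff one is
a natural-number power of the other. -/
def powerGraph (G : Type*) [Group G] : SimpleGraph G where
  Adj x y := x ≠ y ∧ ∃ m : ℕ, x = y ^ m ∨ y = x ^ m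
  symm := by
    constructor
    rintro x y ⟨hxy, m, hm⟩
    exact ⟨hxy.symm, m, hm.symm⟩
  loopless := by
    constructor
    rintro x ⟨hx, -⟩
    exact hx rfl

/-- The power graph of an additive group: distinct `x, y` are adjacent iff one is a
natural-number multiple (additive power) of the other. -/
def addPowerGraph (G : Type*) [AddGroup G] : SimpleGraph G where
  Adj x y := x ≠ y ∧ ∃ m : ℕ, x = m • y ∨ y = m • x
  symm := by
    constructor
    rintro x y ⟨hxy, m, hm⟩
    exact ⟨hxy.symm, m, hm.symm⟩
  loopless := by
    constructor
    rintro x ⟨hx, -⟩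
    exact hx rfl

/-- The distance matrix of a graph on a finite vertex set. -/
def distMatrix {V : Type*} [Fintype V] (G : SimpleGraph V) : Matrix V V ℝ :=
  fun x y => (G.dist x y : ℝ)

/-- The transmission of a vertex: the sum of the distances to all vertices. -/
def transmission {V : Type*} [Fintype V] (G : SimpleGraph V) (v : V) : ℕ :=
  ∑ w, G.dist v w

/-!
In any power graph the identity is adjacent to every other vertex, so distances are `0`, `1` or
`2` according to equality and adjacency. In `Q_{4n}` the cyclic subgroup `⟨a 1⟩` therefore
carries exactly the distances of `P(C_{2n})`, while `xa i` is adjacent only to `1`, `a n` and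
`xa (i + n)`; so the row of `xa i` sums to `4n - 2` over `⟨a 1⟩` and to `4n - 3` over the other
coset. The right-hand side is the larger eigenvalue `λ` of the quotient matrix
`!![T_avg, 4n - 2; 4n - 2, 4n - 3]`, and the vector equal to `4n - 2` on `⟨a 1⟩` and to
`λ - T_avg` on the other coset (its eigenvector, spread over the cosets) has Rayleigh quotient
exactly `λ` for the distance matrix.
-/

open Matrix

theorem Matrix.IsHermitian.exists_mem_spectrum_dotProduct_mulVec_le {ι : Type*} [Fintype ι]
    [DecidableEq ι] [Nonempty ι] {A : Matrix ι ι ℝ} (hA : A.IsHermitian) (v : ι → ℝ) :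
    ∃ μ ∈ spectrum ℝ A, v ⬝ᵥ (A *ᵥ v) ≤ μ * (v ⬝ᵥ v) := by
  obtain ⟨i₀, -, hmax⟩ :=
    Finset.exists_max_image Finset.univ hA.eigenvalues Finset.univ_nonempty
  refine ⟨hA.eigenvalues i₀, hA.eigenvalues_mem_spectrum_real i₀, ?_⟩
  set U : Matrix ι ι ℝ := (hA.eigenvectorUnitary : Matrix ι ι ℝ)
  have hU : U * Uᵀ = 1 := Matrix.mem_unitaryGroup_iff.mp hA.eigenvectorUnitary.2
  set w := Uᵀ *ᵥ v
  have hvU (z : ι → ℝ) : v ⬝ᵥ (U *ᵥ z) = w ⬝ᵥ z := by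
    rw [dotProduct_mulVec, ← mulVec_transpose]
  have hAv : A *ᵥ v = U *ᵥ (diagonal hA.eigenvalues *ᵥ w) := by
    conv_lhs => rw [hA.spectral_theorem]
    rw [Unitary.conjStarAlgAut_apply, ← mulVec_mulVec, ← mulVec_mulVec]
    rfl
  have hquad : v ⬝ᵥ (A *ᵥ v) = ∑ i, hA.eigenvalues i * (w i * w i) := by
    rw [hAv, hvU]
    simp only [dotProduct, mulVec_diagonal]
    exact Finset.sum_congr rfl fun i _ => by ring
  have hnorm : v ⬝ᵥ v = ∑ i, w i * w i := by
    rw [show ∑ i, w i * w i = w ⬝ᵥ w from rfl, ← hvU, mulVec_mulVec, hU, one_mulVec]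
  rw [hquad, hnorm, Finset.mul_sum]
  exact Finset.sum_le_sum fun i hi => mul_le_mul_of_nonneg_right (hmax i hi) (mul_self_nonneg _)

/-- The larger eigenvalue of `!![p, q; q, r]` is a root of its characteristic polynomial. -/
theorem sub_mul_sub_larger_root_eq_sq (p q r : ℝ) :
    (((p + r) + √((p - r) ^ 2 + 4 * q ^ 2)) / 2 - p) *
      (((p + r) + √((p - r) ^ 2 + 4 * q ^ 2)) / 2 - r) = q ^ 2 := by
  linear_combination Real.sq_sqrt (by positivity : 0 ≤ (p - r) ^ 2 + 4 * q ^ 2) / 4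

namespace SimpleGraph

variable {V W : Type*} {G : SimpleGraph V} {H : SimpleGraph W}

theorem dist_eq_of_forall_adj {c : V} (hc : ∀ x, x ≠ c → G.Adj x c) (x y : V) :
    G.dist x y = if x = y then 0 else if G.Adj x y then 1 else 2 := by
  split_ifs with hxy hadj
  · exact hxy ▸ dist_self
  · exact dist_eq_one_iff_adj.mpr hadj
  · have hx : x ≠ c := by rintro rfl; exact hadj (hc y (Ne.symm hxy)).symm
    have hy : y ≠ c := by rintro rfl; exact hadj (hc x hxy)
    let w : G.Walk x y := .cons (hc x hx) (.cons (hc y hy).symm .nil)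
    have h0 : G.dist x y ≠ 0 := (Reachable.dist_eq_zero_iff ⟨w⟩).not.mpr hxy
    have h1 : G.dist x y ≠ 1 := mt dist_eq_one_iff_adj.mp hadj
    have h2 : G.dist x y ≤ 2 := dist_le w
    omega

theorem Embedding.dist_map_of_forall_adj (f : G ↪g H) {c : V} {d : W}
    (hc : ∀ x, x ≠ c → G.Adj x c) (hd : ∀ y, y ≠ d → H.Adj y d) (x y : V) :
    H.dist (f x) (f y) = G.dist x y := by
  simp only [dist_eq_of_forall_adj hc, dist_eq_of_forall_adj hd, f.injective.eq_iff,
    f.map_adj_iff]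

end SimpleGraph

theorem powerGraph_adj_one {G : Type*} [Group G] (x : G) (hx : x ≠ 1) :
    (powerGraph G).Adj x 1 :=
  ⟨hx, 0, .inr (pow_zero x).symm⟩

theorem addPowerGraph_adj_zero {G : Type*} [AddGroup G] (x : G) (hx : x ≠ 0) :
    (addPowerGraph G).Adj x 0 :=
  ⟨hx, 0, .inr (zero_smul ℕ x).symm⟩

theorem distMatrix_isHermitian {V : Type*} [Fintype V] (G : SimpleGraph V) :
    (distMatrix G).IsHermitian := by
  ext x y
  simp [distMatrix, SimpleGraph.dist_comm]

namespace QuaternionGroup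

variable {n : ℕ}

theorem natCast_add_natCast_self : (n : ZMod (2 * n)) + n = 0 := by
  rw [← Nat.cast_add, ← two_mul, ZMod.natCast_self]

theorem natCast_ne_zero [NeZero n] : (n : ZMod (2 * n)) ≠ 0 := by
  have hn := NeZero.pos n
  rw [Ne, ZMod.natCast_eq_zero_iff]
  exact Nat.not_dvd_of_pos_of_lt hn (by omega)

theorem a_pow (i : ZMod (2 * n)) (m : ℕ) : a i ^ m = a (m • i) := by
  induction m with
  | zero => rw [pow_zero, zero_smul, one_def]
  | succ k ih => rw [pow_succ, ih, a_mul_a, succ_nsmul]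

theorem xa_pow_three (i : ZMod (2 * n)) : xa i ^ 3 = xa (i + (n : ZMod (2 * n))) := by
  rw [pow_succ, xa_sq, a_mul_xa, sub_eq_add_neg,
    neg_eq_of_add_eq_zero_right natCast_add_natCast_self]

theorem xa_pow_cases (i : ZMod (2 * n)) (m : ℕ) :
    xa i ^ m = a 0 ∨ xa i ^ m = a n ∨ xa i ^ m = xa i ∨
      xa i ^ m = xa (i + (n : ZMod (2 * n))) := by
  rw [pow_eq_pow_mod m (xa_pow_four i)]
  have : m % 4 < 4 := Nat.mod_lt _ (by norm_num)
  interval_cases m % 4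
  · exact .inl ((pow_zero _).trans one_def)
  · exact .inr (.inr (.inl (pow_one _)))
  · exact .inr (.inl (xa_sq i))
  · exact .inr (.inr (.inr (xa_pow_three i)))

def addPowerGraphEmbedding : addPowerGraph (ZMod (2 * n)) ↪g powerGraph (QuaternionGroup n) where
  toFun := a
  inj' _ _ := a.inj
  map_rel_iff' {i j} := by
    change (a i ≠ a j ∧ ∃ m : ℕ, a i = a j ^ m ∨ a j = a i ^ m) ↔ _
    simp [addPowerGraph, a_pow]

theorem powerGraph_adj_xa_a_iff (i j : ZMod (2 * n)) :
    (powerGraph (QuaternionGroup n)).Adj (xa i) (a j) ↔ j = 0 ∨ j = n := by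
  refine ⟨?_, ?_⟩
  · rintro ⟨-, m, h | h⟩
    · simp [a_pow] at h
    · rcases xa_pow_cases i m with h' | h' | h' | h' <;> rw [h'] at h <;> simp_all [-a_zero]
  · rintro (rfl | rfl)
    · exact a_zero (n := n) ▸ powerGraph_adj_one _ (by simp [← a_zero])
    · exact ⟨by simp, 2, .inr (xa_sq i).symm⟩

theorem powerGraph_adj_xa_xa_iff [NeZero n] (i j : ZMod (2 * n)) :
    (powerGraph (QuaternionGroup n)).Adj (xa i) (xa j) ↔ j = i + n := by
  refine ⟨?_, ?_⟩
  · rintro ⟨hne, m, h | h⟩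
    · rcases xa_pow_cases j m with h' | h' | h' | h' <;> rw [h'] at h <;>
        simp_all [-a_zero, add_assoc, natCast_add_natCast_self]
    · rcases xa_pow_cases i m with h' | h' | h' | h' <;> rw [h'] at h <;> simp_all [-a_zero]
  · rintro rfl
    refine ⟨?_, 3, .inr (xa_pow_three i).symm⟩
    simpa using natCast_ne_zero

theorem powerGraph_dist_a_a (i j : ZMod (2 * n)) :
    (powerGraph (QuaternionGroup n)).dist (a i) (a j) = (addPowerGraph (ZMod (2 * n))).dist i j :=
  addPowerGraphEmbedding.dist_map_of_forall_adj addPowerGraph_adj_zero powerGraph_adj_one i j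

theorem powerGraph_dist_xa_a (i j : ZMod (2 * n)) :
    (powerGraph (QuaternionGroup n)).dist (xa i) (a j) = if j = 0 ∨ j = n then 1 else 2 := by
  simp [SimpleGraph.dist_eq_of_forall_adj powerGraph_adj_one, powerGraph_adj_xa_a_iff]

theorem powerGraph_dist_xa_xa [NeZero n] (i j : ZMod (2 * n)) :
    (powerGraph (QuaternionGroup n)).dist (xa i) (xa j) =
      if j = i then 0 else if j = i + n then 1 else 2 := by
  simp [SimpleGraph.dist_eq_of_forall_adj powerGraph_adj_one, powerGraph_adj_xa_xa_iff, eq_comm]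

theorem sum_powerGraph_dist_xa_a [NeZero n] (i : ZMod (2 * n)) :
    ∑ j, ((powerGraph (QuaternionGroup n)).dist (xa i) (a j) : ℝ) = 4 * n - 2 := by
  have hdist (j : ZMod (2 * n)) : ((powerGraph (QuaternionGroup n)).dist (xa i) (a j) : ℝ) =
      2 - (if j = 0 then 1 else 0) - (if j = n then 1 else 0) := by
    have := natCast_ne_zero (n := n)
    rw [powerGraph_dist_xa_a]
    split_ifs <;> simp_all <;> norm_num
  simp only [hdist, Finset.sum_sub_distrib, Finset.sum_ite_eq', Finset.mem_univ, if_true,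
    Finset.sum_const, Finset.card_univ, ZMod.card, nsmul_eq_mul]
  push_cast
  ring

theorem sum_powerGraph_dist_xa_xa [NeZero n] (i : ZMod (2 * n)) :
    ∑ j, ((powerGraph (QuaternionGroup n)).dist (xa i) (xa j) : ℝ) = 4 * n - 3 := by
  have hdist (j : ZMod (2 * n)) : ((powerGraph (QuaternionGroup n)).dist (xa i) (xa j) : ℝ) =
      2 - 2 * (if j = i then 1 else 0) - (if j = i + n then 1 else 0) := by
    have : i + n ≠ i := by simpa using natCast_ne_zero (n := n)
    rw [powerGraph_dist_xa_xa]
    split_ifs <;> simp_all; norm_num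
  simp only [hdist, Finset.sum_sub_distrib, ← Finset.mul_sum, Finset.sum_ite_eq',
    Finset.mem_univ, if_true, Finset.sum_const, Finset.card_univ, ZMod.card, nsmul_eq_mul]
  push_cast
  ring

theorem sum_univ_eq_sum_a_add_sum_xa [NeZero n] {M : Type*} [AddCommMonoid M]
    (f : QuaternionGroup n → M) :
    ∑ x, f x = ∑ i, f (a i) + ∑ i, f (xa i) := by
  let e : ZMod (2 * n) ⊕ ZMod (2 * n) ≃ QuaternionGroup n :=
    { toFun := Sum.elim a xa
      invFun := fun | a i => .inl i | xa i => .inr i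
      left_inv := by rintro (i | i) <;> rfl
      right_inv := by rintro (x | x) <;> rfl }
  rw [← e.sum_comp, Fintype.sum_sum_type]
  rfl

def blockVector (n : ℕ) (α β : ℝ) : QuaternionGroup n → ℝ
  | a _ => α
  | xa _ => β

variable [NeZero n]

theorem dotProduct_blockVector_self (α β : ℝ) :
    blockVector n α β ⬝ᵥ blockVector n α β = 2 * n * (α ^ 2 + β ^ 2) := by
  simp only [dotProduct, sum_univ_eq_sum_a_add_sum_xa (n := n), blockVector, Finset.sum_const,
    Finset.card_univ, ZMod.card, nsmul_eq_mul]
  push_cast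
  ring

theorem distMatrix_mulVec_blockVector_xa (α β : ℝ) (i : ZMod (2 * n)) :
    (distMatrix (powerGraph (QuaternionGroup n)) *ᵥ blockVector n α β) (xa i) =
      α * (4 * n - 2) + β * (4 * n - 3) := by
  simp only [mulVec, dotProduct, sum_univ_eq_sum_a_add_sum_xa, distMatrix, blockVector,
    ← Finset.sum_mul, sum_powerGraph_dist_xa_a, sum_powerGraph_dist_xa_xa]
  ring

theorem distMatrix_mulVec_blockVector_a (α β : ℝ) (i : ZMod (2 * n)) :
    (distMatrix (powerGraph (QuaternionGroup n)) *ᵥ blockVector n α β) (a i) =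
      α * transmission (addPowerGraph (ZMod (2 * n))) i +
        β * ∑ j, ((powerGraph (QuaternionGroup n)).dist (a i) (xa j) : ℝ) := by
  simp only [mulVec, dotProduct, sum_univ_eq_sum_a_add_sum_xa, distMatrix, blockVector,
    ← Finset.sum_mul, powerGraph_dist_a_a, transmission, Nat.cast_sum]
  ring

theorem dotProduct_distMatrix_mulVec_blockVector (α β : ℝ) :
    blockVector n α β ⬝ᵥ
        (distMatrix (powerGraph (QuaternionGroup n)) *ᵥ blockVector n α β) =
      α ^ 2 * ∑ i, (transmission (addPowerGraph (ZMod (2 * n))) i : ℝ) +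
        2 * n * (2 * α * β * (4 * n - 2) + β ^ 2 * (4 * n - 3)) := by
  have hcross : ∑ i, ∑ j, ((powerGraph (QuaternionGroup n)).dist (a i) (xa j) : ℝ) =
      2 * n * (4 * n - 2) := by
    simp only [SimpleGraph.dist_comm (u := a _)]
    rw [Finset.sum_comm]
    simp [sum_powerGraph_dist_xa_a, ZMod.card]
    ring
  simp only [dotProduct, sum_univ_eq_sum_a_add_sum_xa, distMatrix_mulVec_blockVector_a,
    distMatrix_mulVec_blockVector_xa]
  simp only [blockVector, mul_add, Finset.sum_add_distrib, ← Finset.mul_sum, hcross,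
    Finset.sum_const, Finset.card_univ, ZMod.card, nsmul_eq_mul]
  push_cast
  ring

end QuaternionGroup

theorem distSpectralRadius_powerGraph_dicyclic_lower_bound_general
    (n : ℕ) [NeZero n] (rho Tavg : ℝ)
    (hrho : IsGreatest (spectrum ℝ (distMatrix (powerGraph (QuaternionGroup n)))) rho)
    (hTavg : Tavg =
      (∑ v : ZMod (2 * n), (transmission (addPowerGraph (ZMod (2 * n))) v : ℝ)) /
        (2 * (n : ℝ))) :
    ((Tavg + 4 * n - 3) +
      Real.sqrt ((Tavg - 4 * n + 3) ^ 2 + 16 * (2 * (n : ℝ) - 1) ^ 2)) / 2 ≤ rho := by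
  rw [show Tavg + 4 * (n : ℝ) - 3 = Tavg + (4 * n - 3) by ring,
    show (Tavg - 4 * n + 3) ^ 2 + 16 * (2 * (n : ℝ) - 1) ^ 2 =
      (Tavg - (4 * n - 3)) ^ 2 + 4 * (4 * n - 2) ^ 2 by ring]
  have hchar := sub_mul_sub_larger_root_eq_sq Tavg (4 * n - 2) (4 * n - 3)
  set lam := ((Tavg + (4 * n - 3)) + √((Tavg - (4 * n - 3)) ^ 2 + 4 * (4 * n - 2) ^ 2)) / 2
  have hn : (1 : ℝ) ≤ n := Nat.one_le_cast.mpr NeZero.one_le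
  have hsum : ∑ i, (transmission (addPowerGraph (ZMod (2 * n))) i : ℝ) = 2 * n * Tavg := by
    rw [hTavg]
    field_simp
  set v := QuaternionGroup.blockVector n (4 * n - 2) (lam - Tavg)
  have hquad :
      v ⬝ᵥ (distMatrix (powerGraph (QuaternionGroup n)) *ᵥ v) = lam * (v ⬝ᵥ v) := by
    rw [QuaternionGroup.dotProduct_distMatrix_mulVec_blockVector,
      QuaternionGroup.dotProduct_blockVector_self, hsum]
    linear_combination (-2 * n * (lam - Tavg)) * hchar
  have hpos : 0 < v ⬝ᵥ v := by
    rw [QuaternionGroup.dotProduct_blockVector_self]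
    have : 0 < (4 * n - 2 : ℝ) := by linarith
    positivity
  obtain ⟨μ, hμ, hle⟩ :=
    (distMatrix_isHermitian _).exists_mem_spectrum_dotProduct_mulVec_le v
  exact (le_of_mul_le_mul_right (hquad ▸ hle) hpos).trans (hrho.2 hμ)

/-- Distance-spectral-radius lower bound for the power graph of the dicyclic group of
order `4n`, in terms of the average transmission of the power graph of `ZMod (2n)`. -/
theorem distSpectralRadius_powerGraph_dicyclic_lower_bound
    (n : ℕ) [NeZero n] (hn : 2 ≤ n) (rho Tavg : ℝ)
    (hrho : IsGreatest (spectrum ℝ (distMatrix (powerGraph (QuaternionGroup n)))) rho)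
    (hTavg : Tavg =
      (∑ v : ZMod (2 * n), (transmission (addPowerGraph (ZMod (2 * n))) v : ℝ)) /
        (2 * (n : ℝ))) :
    ((Tavg + 4 * n - 3) +
      Real.sqrt ((Tavg - 4 * n + 3) ^ 2 + 16 * (2 * (n : ℝ) - 1) ^ 2)) / 2 ≤ rho :=
  distSpectralRadius_powerGraph_dicyclic_lower_bound_general n rho Tavg hrho hTavg
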